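/- Let I=⟨A,A?,R,R?⟩ be an incomplete argumentation framework, S⊆A∪A? a set of arguments, and j a verification status such that S is stable-j with respect to at least one partial completion of I. Then every strongly j-relevant element is j-relevant: SRE⁺(I,S,j)⊆RE⁺(I,S,j) and SRE⁻(I,S,j)⊆RE⁻(I,S,j). -/
import Mathlib


universe u

/-- An abstract argumentation framework: a set of arguments with an attack relation. -/
structure AF (α : Type u) where
  args : Set α
  att : Set (α × α)

namespace AF

variable {α : Type u}

/-- `S⁺_F`: arguments attacked by `S`. -/
def plusSet (F : AF α) (S : Set α) : Set α := {a | a ∈ F.args ∧ ∃ b ∈ S, (b, a) ∈ F.att}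

/-- `S⁻_F`: arguments attacking `S`. -/
def minusSet (F : AF α) (S : Set α) : Set α := {a | a ∈ F.args ∧ ∃ b ∈ S, (a, b) ∈ F.att}

/-- `S` is conflict-free in `F`. -/
def confFree (F : AF α) (S : Set α) : Prop := S ∩ F.plusSet S = ∅

/-- `S` defends `a` in `F`: every attacker of `a` is attacked by `S`. -/
def defends (F : AF α) (S : Set α) (a : α) : Prop := ∀ b, (b, a) ∈ F.att → b ∈ F.plusSet S

/-- The characteristic function `Γ_F(S)`: arguments defended by `S`. -/
def Γ (F : AF α) (S : Set α) : Set α := {a | a ∈ F.args ∧ F.defends S a}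

/-- Admissible: conflict-free and self-defending. -/
def isAd (F : AF α) (S : Set α) : Prop := S ⊆ F.args ∧ F.confFree S ∧ S ⊆ F.Γ S

/-- Stable: conflict-free and attacking exactly the outside. -/
def isSt (F : AF α) (S : Set α) : Prop := S ⊆ F.args ∧ F.confFree S ∧ F.plusSet S = F.args \ S

/-- Complete: admissible and containing all defended arguments. -/
def isCo (F : AF α) (S : Set α) : Prop := F.isAd S ∧ F.Γ S ⊆ S

/-- Grounded: ⊆-minimal complete. -/
def isGr (F : AF α) (S : Set α) : Prop := F.isCo S ∧ ∀ T, F.isCo T → T ⊆ S → T = S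

/-- Preferred: ⊆-maximal admissible. -/
def isPr (F : AF α) (S : Set α) : Prop := F.isAd S ∧ ∀ T, F.isAd T → S ⊆ T → S = T

end AF

/-- The five common semantics. -/
inductive Sem : Type
  | ad | st | co | gr | pr
deriving DecidableEq

/-- `S` is a `σ`-extension of `F`. -/
def extOf {α : Type u} : Sem → AF α → Set α → Prop
  | .ad => AF.isAd
  | .st => AF.isSt
  | .co => AF.isCo
  | .gr => AF.isGr
  | .pr => AF.isPr

/-- An incomplete argumentation framework (data part). -/
structure IAF (α : Type u) where
  A : Set α
  Aq : Set α
  R : Set (α × α)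
  Rq : Set (α × α)

namespace IAF

variable {α : Type u}

/-- Well-formedness: `A`,`A?` disjoint; `R`,`R?` disjoint subsets of `(A∪A?)×(A∪A?)`. -/
def WF (I : IAF α) : Prop :=
  Disjoint I.A I.Aq ∧ Disjoint I.R I.Rq ∧
  I.R ⊆ (I.A ∪ I.Aq) ×ˢ (I.A ∪ I.Aq) ∧
  I.Rq ⊆ (I.A ∪ I.Aq) ×ˢ (I.A ∪ I.Aq)

/-- `cert(I)`: the AF projected on the certain part. -/
def cert (I : IAF α) : AF α := ⟨I.A, I.R ∩ I.A ×ˢ I.A⟩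

/-- `I'` is a partial completion of `I`. -/
def PartOf (I' I : IAF α) : Prop :=
  I'.WF ∧ I.A ⊆ I'.A ∧ I'.A ⊆ I.A ∪ I.Aq ∧
  I.R ∩ (I'.A ∪ I'.Aq) ×ˢ (I'.A ∪ I'.Aq) ⊆ I'.R ∧
  I'.R ⊆ I.R ∪ I.Rq ∧ I'.Aq ⊆ I.Aq ∧ I'.Rq ⊆ I.Rq

/-- `F` is a completion of `I`. -/
def IsCompletion (I : IAF α) (F : AF α) : Prop := ∃ I' : IAF α, I'.PartOf I ∧ F = I'.cert

/-- `I + R₀` for a set of uncertain attacks. -/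
def addR (I : IAF α) (R0 : Set (α × α)) : IAF α := ⟨I.A, I.Aq, I.R ∪ R0, I.Rq \ R0⟩

/-- `I − R₀` for a set of uncertain attacks. -/
def subR (I : IAF α) (R0 : Set (α × α)) : IAF α := ⟨I.A, I.Aq, I.R, I.Rq \ R0⟩

/-- `I + A₀` for a set of uncertain arguments. -/
def addA (I : IAF α) (A0 : Set α) : IAF α := ⟨I.A ∪ A0, I.Aq \ A0, I.R, I.Rq⟩

/-- `I − A₀` for a set of uncertain arguments. -/
def subA (I : IAF α) (A0 : Set α) : IAF α :=
  ⟨I.A, I.Aq \ A0,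
   I.R \ {p | p ∈ I.R ∪ I.Rq ∧ (p.1 ∈ A0 ∨ p.2 ∈ A0)},
   I.Rq \ {p | p ∈ I.R ∪ I.Rq ∧ (p.1 ∈ A0 ∨ p.2 ∈ A0)}⟩

/-- `S⁺_I`. -/
def plusI (I : IAF α) (S : Set α) : Set α := {a | a ∈ I.A ∪ I.Aq ∧ ∃ b ∈ S, (b, a) ∈ I.R}

/-- `S⁻_I`. -/
def minusI (I : IAF α) (S : Set α) : Set α := {a | a ∈ I.A ∪ I.Aq ∧ ∃ b ∈ S, (a, b) ∈ I.R}

/-- `S^∼_I`. -/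
def simI (I : IAF α) (S : Set α) : Set α :=
  {a | a ∈ I.A ∪ I.Aq ∧ ∀ b ∈ S, (b, a) ∉ I.R ∪ I.Rq}

end IAF

/-- An element of an IAF: either an argument or an attack. -/
inductive Elem (α : Type u) : Type u
  | arg (a : α)
  | att (r : α × α)

/-- `e` is an uncertain element of `I`, i.e. `e ∈ A? ∪ R?`. -/
def IAF.isUnc {α : Type u} (I : IAF α) : Elem α → Prop
  | .arg a => a ∈ I.Aq
  | .att r => r ∈ I.Rq

/-- `I + {e}`. -/
def IAF.addE {α : Type u} (I : IAF α) : Elem α → IAF α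
  | .arg a => I.addA {a}
  | .att r => I.addR {r}

/-- `I − {e}`. -/
def IAF.subE {α : Type u} (I : IAF α) : Elem α → IAF α
  | .arg a => I.subA {a}
  | .att r => I.subR {r}

/-- `e` is the unique uncertain element of `I`, i.e. `A? ∪ R? = {e}`. -/
def onlyUnc {α : Type u} (I : IAF α) : Elem α → Prop
  | .arg a => I.Aq = {a} ∧ I.Rq = ∅
  | .att r => I.Aq = ∅ ∧ I.Rq = {r}

/-- A verification status: a semantics together with true/false. -/
abbrev VStatus := Sem × Bool

/-- `S` has verification status `j` in the AF `F`. -/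
def hasStatus {α : Type u} (F : AF α) (S : Set α) (j : VStatus) : Prop :=
  cond j.2 (extOf j.1 F S) (¬ extOf j.1 F S)

/-- `S` is stable-`j` w.r.t. `I`. -/
def IAF.stableJ {α : Type u} (I : IAF α) (S : Set α) (j : VStatus) : Prop :=
  ∀ F, I.IsCompletion F → hasStatus F S j

/-- `S` is stable-`σ` w.r.t. `I`. -/
def IAF.stableSem {α : Type u} (I : IAF α) (S : Set α) (σ : Sem) : Prop :=
  I.stableJ S (σ, true) ∨ I.stableJ S (σ, false)

/-- `RE⁺(I,S,j)`: uncertain elements whose addition is `j`-relevant for `S` w.r.t. `I`. -/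
def REplus {α : Type u} (I : IAF α) (S : Set α) (j : VStatus) : Set (Elem α) :=
  {e | I.isUnc e ∧ ∃ I' : IAF α, I'.PartOf I ∧ onlyUnc I' e ∧
    hasStatus (I'.addE e).cert S j ∧ ¬ hasStatus (I'.subE e).cert S j}

/-- `RE⁻(I,S,j)`: uncertain elements whose removal is `j`-relevant for `S` w.r.t. `I`. -/
def REminus {α : Type u} (I : IAF α) (S : Set α) (j : VStatus) : Set (Elem α) :=
  {e | I.isUnc e ∧ ∃ I' : IAF α, I'.PartOf I ∧ onlyUnc I' e ∧
    hasStatus (I'.subE e).cert S j ∧ ¬ hasStatus (I'.addE e).cert S j}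

/-- `e` is `σ`-irrelevant for `S` w.r.t. `I`. -/
def irrelevant {α : Type u} (I : IAF α) (S : Set α) (σ : Sem) (e : Elem α) : Prop :=
  e ∉ REplus I S (σ, true) ∧ e ∉ REminus I S (σ, true) ∧
  e ∉ REplus I S (σ, false) ∧ e ∉ REminus I S (σ, false)

/-- `PosVer_σ(I,S) = true`. -/
def PosVer {α : Type u} (σ : Sem) (I : IAF α) (S : Set α) : Prop :=
  ∃ F, I.IsCompletion F ∧ extOf σ F S

/-- `NecVer_σ(I,S) = true`. -/
def NecVer {α : Type u} (σ : Sem) (I : IAF α) (S : Set α) : Prop :=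
  ∀ F, I.IsCompletion F → extOf σ F S

/-- `SRE⁺(I,S,j)`: uncertain elements whose addition is strongly `j`-relevant. -/
def SREplus {α : Type u} (I : IAF α) (S : Set α) (j : VStatus) : Set (Elem α) :=
  {e | I.isUnc e ∧ ∀ I' : IAF α, I'.PartOf (I.subE e) → ¬ I'.stableJ S j}

/-- `SRE⁻(I,S,j)`: uncertain elements whose removal is strongly `j`-relevant. -/
def SREminus {α : Type u} (I : IAF α) (S : Set α) (j : VStatus) : Set (Elem α) :=
  {e | I.isUnc e ∧ ∀ I' : IAF α, I'.PartOf (I.addE e) → ¬ I'.stableJ S j}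

/-- The `OutRel(I,S,(a,b))` predicate. -/
def OutRel {α : Type u} (I : IAF α) (S : Set α) (r : α × α) : Prop :=
  (I.minusI {r.2} \ {r.1}) ∩ I.simI S = ∅ ∧
  PosVer Sem.co
    ((I.addR {p | p ∈ I.Rq ∧ p.1 ∈ S ∧ p.2 ∈ I.minusI {r.2} \ {r.1}}).subR
      {p | p ∈ I.Rq ∧ p.1 ≠ r.1 ∧ p.2 = r.2}) S


section Helpers

variable {α : Type u}

lemma partOf_trans {K J I : IAF α} (h1 : K.PartOf J) (h2 : J.PartOf I) : K.PartOf I := by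
  obtain ⟨hW1, hA1, hA1', hR1, hR1', hAq1, hRq1⟩ := h1
  obtain ⟨hW2, hA2, hA2', hR2, hR2', hAq2, hRq2⟩ := h2
  refine ⟨hW1, hA2.trans hA1, ?_, ?_, ?_, hAq1.trans hAq2, hRq1.trans hRq2⟩
  · intro x hx
    rcases hA1' hx with h | h
    · exact hA2' h
    · exact Or.inr (hAq2 h)
  · intro p hp
    obtain ⟨hpR, hpU⟩ := hp
    have hU : p ∈ (K.A ∪ K.Aq) ×ˢ (K.A ∪ K.Aq) := hpU
    have hU' : p ∈ (J.A ∪ J.Aq) ×ˢ (J.A ∪ J.Aq) := by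
      obtain ⟨h1', h2'⟩ := hU
      constructor
      · rcases h1' with h | h
        · exact hA1' h
        · exact Or.inr (hAq1 h)
      · rcases h2' with h | h
        · exact hA1' h
        · exact Or.inr (hAq1 h)
    exact hR1 ⟨hR2 ⟨hpR, hU'⟩, hU⟩
  · intro p hp
    rcases hR1' hp with h | h
    · exact hR2' h
    · exact Or.inr (hRq2 h)

lemma completion_mono {J I : IAF α} (h : J.PartOf I) {F : AF α}
    (hF : J.IsCompletion F) : I.IsCompletion F := by
  obtain ⟨K, hK, hKF⟩ := hF
  exact ⟨K, partOf_trans hK h, hKF⟩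

lemma stable_mono {J I : IAF α} (h : J.PartOf I) {S : Set α} {j : VStatus}
    (hst : I.stableJ S j) : J.stableJ S j :=
  fun F hF => hst F (completion_mono h hF)

lemma not_stable_elim {J : IAF α} {S : Set α} {j : VStatus} (h : ¬ J.stableJ S j) :
    ∃ K : IAF α, K.PartOf J ∧ ¬ hasStatus K.cert S j := by
  simp only [IAF.stableJ, not_forall] at h
  obtain ⟨F, hF, hns⟩ := h
  obtain ⟨K, hK, rfl⟩ := hF
  exact ⟨K, hK, hns⟩

lemma att_plus {I : IAF α} {S : Set α} {j : VStatus} {r : α × α}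
    (hWF : I.WF) (hr : r ∈ I.Rq)
    (Ip : IAF α) (hIp : Ip.PartOf I) (hst : Ip.stableJ S j)
    (hstr : ∀ I' : IAF α, I'.PartOf (I.subR {r}) → ¬ I'.stableJ S j) :
    ∃ I' : IAF α, I'.PartOf I ∧ onlyUnc I' (.att r) ∧
      hasStatus ((I'.addE (.att r)).cert) S j ∧ ¬ hasStatus ((I'.subE (.att r)).cert) S j := by
  obtain ⟨wA, wR, wRu, wRqu⟩ := hWF
  obtain ⟨⟨pA, pR, pRu, pRqu⟩, h2, h3, h4, h5, h6, h7⟩ := hIp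
  have hrR : r ∉ I.R := fun h => wR.ne_of_mem h hr rfl
  -- r is not uncertain in Ip
  have hrq : r ∉ Ip.Rq := by
    intro hrq
    refine hstr (Ip.subR {r}) ?_ (stable_mono ?_ hst)
    · refine ⟨⟨pA, pR.mono_right Set.diff_subset, pRu,
        (Set.diff_subset).trans pRqu⟩, h2, h3, h4, ?_, h6,
        fun p hp => ⟨h7 hp.1, hp.2⟩⟩
      intro p hp
      rcases h5 hp with h | h
      · exact Or.inl h
      · exact Or.inr ⟨h, fun he => pR.ne_of_mem hp hrq (by simpa using he)⟩
    · exact ⟨⟨pA, pR.mono_right Set.diff_subset, pRu,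
        (Set.diff_subset).trans pRqu⟩, subset_rfl, Set.subset_union_left,
        fun p hp => hp.1, Set.subset_union_left, subset_rfl, Set.diff_subset⟩
  -- r is certain in Ip
  have hrp : r ∈ Ip.R := by
    by_contra hrp
    refine hstr Ip ?_ hst
    refine ⟨⟨pA, pR, pRu, pRqu⟩, h2, h3, h4, ?_, h6, fun p hp => ⟨h7 hp, ?_⟩⟩
    · intro p hp
      rcases h5 hp with h | h
      · exact Or.inl h
      · exact Or.inr ⟨h, fun he => hrp (he ▸ hp)⟩
    · intro he
      exact hrq (he ▸ hp)
  -- J : Ip with r removed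
  set J : IAF α := ⟨Ip.A, Ip.Aq, Ip.R \ {r}, Ip.Rq⟩ with hJdef
  have hJWF : J.WF := ⟨pA, pR.mono_left Set.diff_subset,
    (Set.diff_subset).trans pRu, pRqu⟩
  have hJI : J.PartOf I :=
    ⟨hJWF, h2, h3,
     fun p hp => ⟨h4 hp, fun he => hrR (he ▸ hp.1)⟩,
     Set.diff_subset.trans h5, h6, h7⟩
  have hJsub : J.PartOf (I.subR {r}) := by
    refine ⟨hJWF, h2, h3, fun p hp => ⟨h4 hp, ?_⟩, ?_, h6, fun p hp => ⟨h7 hp, ?_⟩⟩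
    · exact fun he => hrR (he ▸ hp.1)
    · intro p hp
      rcases h5 hp.1 with h | h
      · exact Or.inl h
      · exact Or.inr ⟨h, hp.2⟩
    · exact fun he => hrq (he ▸ hp)
  obtain ⟨K, hKJ, hKns⟩ := not_stable_elim (hstr J hJsub)
  have hKI : K.PartOf I := partOf_trans hKJ hJI
  obtain ⟨⟨kA, kR, kRu, kRqu⟩, k2, k3, k4, k5, k6, k7⟩ := hKJ
  have hrK : r ∉ K.R := by
    intro h
    rcases k5 h with h' | h'
    · exact h'.2 rfl
    · exact hrq h' 
  by_cases hend : r.1 ∈ K.A ∧ r.2 ∈ K.A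
  · -- main case: build I'
    refine ⟨⟨K.A, ∅, K.R ∩ K.A ×ˢ K.A, {r}⟩, ?_, ⟨rfl, rfl⟩, ?_, ?_⟩
    · -- PartOf I
      refine ⟨⟨?_, ?_, ?_, ?_⟩, h2.trans k2, fun x hx => hKI.2.2.1 hx, ?_, ?_, ?_, ?_⟩
      · simp
      · exact Set.disjoint_singleton_right.mpr (fun h => hrK h.1)
      · intro p hp
        exact ⟨Or.inl hp.2.1, Or.inl hp.2.2⟩
      · intro p hp
        rw [Set.mem_singleton_iff] at hp
        subst hp
        exact ⟨Or.inl hend.1, Or.inl hend.2⟩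
      · intro p hp
        obtain ⟨hp1, hp2⟩ := hp
        have hu1 : p.1 ∈ K.A := by rcases hp2.1 with h | h; exact h; exact absurd h (Set.notMem_empty _)
        have hu2 : p.2 ∈ K.A := by rcases hp2.2 with h | h; exact h; exact absurd h (Set.notMem_empty _)
        exact ⟨hKI.2.2.2.1 ⟨hp1, Or.inl hu1, Or.inl hu2⟩, hu1, hu2⟩
      · exact (Set.inter_subset_left).trans hKI.2.2.2.2.1
      · exact Set.empty_subset _
      · exact Set.singleton_subset_iff.mpr hr
    · -- status of addE
      refine hst _ ⟨⟨K.A, ∅, (K.R ∩ K.A ×ˢ K.A) ∪ {r}, ∅⟩, ?_, rfl⟩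
      refine ⟨⟨?_, ?_, ?_, ?_⟩, k2, fun x hx => k3 hx, ?_, ?_, ?_, ?_⟩
      · simp
      · simp
      · intro p hp
        rcases hp with hp | hp
        · exact ⟨Or.inl hp.2.1, Or.inl hp.2.2⟩
        · rw [Set.mem_singleton_iff] at hp
          subst hp
          exact ⟨Or.inl hend.1, Or.inl hend.2⟩
      · simp
      · intro p hp
        obtain ⟨hp1, hp2⟩ := hp
        have hu1 : p.1 ∈ K.A := by rcases hp2.1 with h | h; exact h; exact absurd h (Set.notMem_empty _)
        have hu2 : p.2 ∈ K.A := by rcases hp2.2 with h | h; exact h; exact absurd h (Set.notMem_empty _)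
        by_cases hpr : p = r
        · exact Or.inr (by simp [hpr])
        · have hpJ : p ∈ J.R := ⟨hp1, hpr⟩
          exact Or.inl ⟨k4 ⟨hpJ, Or.inl hu1, Or.inl hu2⟩, hu1, hu2⟩
      · intro p hp
        rcases hp with hp | hp
        · rcases k5 hp.1 with h | h
          · exact Or.inl h.1
          · exact Or.inr h
        · rw [Set.mem_singleton_iff] at hp; subst hp; exact Or.inl hrp
      · exact Set.empty_subset _
      · exact Set.empty_subset _
    · -- not status of subE
      have hcerteq : ((IAF.mk K.A ∅ (K.R ∩ K.A ×ˢ K.A) {r}).subE (.att r)).cert = K.cert := by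
        show (AF.mk K.A ((K.R ∩ K.A ×ˢ K.A) ∩ K.A ×ˢ K.A)) = AF.mk K.A (K.R ∩ K.A ×ˢ K.A)
        rw [Set.inter_assoc, Set.inter_self]
      rw [hcerteq]
      exact hKns
  · -- degenerate: cert K is a completion of Ip, contradiction
    exfalso
    apply hKns
    have hMK : (IAF.mk K.A (∅ : Set α) (K.R ∩ K.A ×ˢ K.A) (∅ : Set (α × α))).cert = K.cert := by
      show (AF.mk K.A ((K.R ∩ K.A ×ˢ K.A) ∩ K.A ×ˢ K.A)) = AF.mk K.A (K.R ∩ K.A ×ˢ K.A)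
      rw [Set.inter_assoc, Set.inter_self]
    rw [← hMK]
    refine hst _ ⟨_, ?_, rfl⟩
    refine ⟨⟨?_, ?_, ?_, ?_⟩, k2, fun x hx => k3 hx, ?_, ?_, ?_, ?_⟩
    · simp
    · simp
    · intro p hp; exact ⟨Or.inl hp.2.1, Or.inl hp.2.2⟩
    · simp
    · intro p hp
      obtain ⟨hp1, hp2⟩ := hp
      have hu1 : p.1 ∈ K.A := by rcases hp2.1 with h | h; exact h; exact absurd h (Set.notMem_empty _)
      have hu2 : p.2 ∈ K.A := by rcases hp2.2 with h | h; exact h; exact absurd h (Set.notMem_empty _)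
      have hpr : p ≠ r := by
        intro he; subst he; exact hend ⟨hu1, hu2⟩
      exact ⟨k4 ⟨⟨hp1, hpr⟩, Or.inl hu1, Or.inl hu2⟩, hu1, hu2⟩
    · intro p hp
      rcases k5 hp.1 with h | h
      · exact Or.inl h.1
      · exact Or.inr h
    · exact Set.empty_subset _
    · exact Set.empty_subset _

lemma att_minus {I : IAF α} {S : Set α} {j : VStatus} {r : α × α}
    (hWF : I.WF) (hr : r ∈ I.Rq)
    (Ip : IAF α) (hIp : Ip.PartOf I) (hst : Ip.stableJ S j)
    (hstr : ∀ I' : IAF α, I'.PartOf (I.addR {r}) → ¬ I'.stableJ S j) :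
    ∃ I' : IAF α, I'.PartOf I ∧ onlyUnc I' (.att r) ∧
      hasStatus ((I'.subE (.att r)).cert) S j ∧ ¬ hasStatus ((I'.addE (.att r)).cert) S j := by
  obtain ⟨wA, wR, wRu, wRqu⟩ := hWF
  obtain ⟨⟨pA, pR, pRu, pRqu⟩, h2, h3, h4, h5, h6, h7⟩ := hIp
  have hrR : r ∉ I.R := fun h => wR.ne_of_mem h hr rfl
  have hrp : r ∉ Ip.R := by
    intro hrp
    refine hstr Ip ⟨⟨pA, pR, pRu, pRqu⟩, h2, h3, ?_, ?_, h6, ?_⟩ hst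
    · intro p hp
      rcases hp.1 with h | h
      · exact h4 ⟨h, hp.2⟩
      · rw [Set.mem_singleton_iff] at h; subst h; exact hrp
    · intro p hp
      rcases h5 hp with h | h
      · exact Or.inl (Or.inl h)
      · by_cases hpr : p = r
        · exact Or.inl (Or.inr hpr)
        · exact Or.inr ⟨h, hpr⟩
    · exact fun p hp => ⟨h7 hp, fun he => pR.ne_of_mem hrp hp (by simpa using he.symm)⟩
  have hrq : r ∉ Ip.Rq := by
    intro hrq
    set J : IAF α := ⟨Ip.A, Ip.Aq, Ip.R ∪ {r}, Ip.Rq \ {r}⟩ with hJdef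
    have hJWF : J.WF := by
      refine ⟨pA, ?_, ?_, Set.diff_subset.trans pRqu⟩
      · rw [Set.disjoint_left]
        rintro p (hp | hp) hp2
        · exact pR.ne_of_mem hp hp2.1 rfl
        · rw [Set.mem_singleton_iff] at hp; exact hp2.2 hp
      · exact Set.union_subset pRu (Set.singleton_subset_iff.mpr (pRqu hrq))
    have hJIp : J.PartOf Ip := by
      refine ⟨hJWF, subset_rfl, Set.subset_union_left,
        fun p hp => Or.inl hp.1, ?_, subset_rfl, Set.diff_subset⟩
      intro p hp
      rcases hp with h | h
      · exact Or.inl h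
      · rw [Set.mem_singleton_iff] at h; subst h; exact Or.inr hrq
    have hJadd : J.PartOf (I.addR {r}) := by
      refine ⟨hJWF, h2, h3, ?_, ?_, h6, fun p hp => ⟨h7 hp.1, hp.2⟩⟩
      · intro p hp
        rcases hp.1 with h | h
        · exact Or.inl (h4 ⟨h, hp.2⟩)
        · exact Or.inr h
      · intro p hp
        rcases hp with h | h
        · rcases h5 h with h' | h'
          · exact Or.inl (Or.inl h')
          · by_cases hpr : p = r
            · exact Or.inl (Or.inr hpr)
            · exact Or.inr ⟨h', hpr⟩
        · exact Or.inl (Or.inr h)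
    exact hstr J hJadd (stable_mono hJIp hst)
  by_cases huniv : r.1 ∈ Ip.A ∪ Ip.Aq ∧ r.2 ∈ Ip.A ∪ Ip.Aq
  · -- main case
    set J : IAF α := ⟨Ip.A, Ip.Aq, Ip.R ∪ {r}, Ip.Rq⟩ with hJdef
    have hJWF : J.WF := by
      refine ⟨pA, ?_, ?_, pRqu⟩
      · rw [Set.disjoint_left]
        rintro p (hp | hp) hp2
        · exact pR.ne_of_mem hp hp2 rfl
        · rw [Set.mem_singleton_iff] at hp; subst hp; exact hrq hp2
      · refine Set.union_subset pRu (Set.singleton_subset_iff.mpr ⟨huniv.1, huniv.2⟩)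
    have hJadd : J.PartOf (I.addR {r}) := by
      refine ⟨hJWF, h2, h3, ?_, ?_, h6, fun p hp => ⟨h7 hp, fun he => hrq (he ▸ hp)⟩⟩
      · intro p hp
        rcases hp.1 with h | h
        · exact Or.inl (h4 ⟨h, hp.2⟩)
        · exact Or.inr h
      · intro p hp
        rcases hp with h | h
        · rcases h5 h with h' | h'
          · exact Or.inl (Or.inl h')
          · by_cases hpr : p = r
            · exact Or.inl (Or.inr hpr)
            · exact Or.inr ⟨h', hpr⟩
        · exact Or.inl (Or.inr h)
    have hJI : J.PartOf I := by
      refine ⟨hJWF, h2, h3, fun p hp => Or.inl (h4 hp), ?_, h6, h7⟩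
      intro p hp
      rcases hp with h | h
      · exact h5 h
      · rw [Set.mem_singleton_iff] at h; subst h; exact Or.inr hr
    obtain ⟨K, hKJ, hKns⟩ := not_stable_elim (hstr J hJadd)
    have hKI : K.PartOf I := partOf_trans hKJ hJI
    obtain ⟨⟨kA, kR, kRu, kRqu⟩, k2, k3, k4, k5, k6, k7⟩ := hKJ
    by_cases hend : r.1 ∈ K.A ∧ r.2 ∈ K.A
    · have hrK : r ∈ K.R := k4 ⟨Or.inr rfl, Or.inl hend.1, Or.inl hend.2⟩
      refine ⟨⟨K.A, ∅, (K.R ∩ K.A ×ˢ K.A) \ {r}, {r}⟩, ?_, ⟨rfl, rfl⟩, ?_, ?_⟩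
      · refine ⟨⟨?_, ?_, ?_, ?_⟩, h2.trans k2, fun x hx => hKI.2.2.1 hx, ?_, ?_, ?_, ?_⟩
        · simp
        · exact Set.disjoint_singleton_right.mpr (fun h => h.2 rfl)
        · exact fun p hp => ⟨Or.inl hp.1.2.1, Or.inl hp.1.2.2⟩
        · intro p hp
          rw [Set.mem_singleton_iff] at hp; subst hp
          exact ⟨Or.inl hend.1, Or.inl hend.2⟩
        · intro p hp
          obtain ⟨hp1, hp2⟩ := hp
          have hu1 : p.1 ∈ K.A := by rcases hp2.1 with h | h; exact h; exact absurd h (Set.notMem_empty _)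
          have hu2 : p.2 ∈ K.A := by rcases hp2.2 with h | h; exact h; exact absurd h (Set.notMem_empty _)
          exact ⟨⟨hKI.2.2.2.1 ⟨hp1, Or.inl hu1, Or.inl hu2⟩, hu1, hu2⟩,
            fun he => hrR (he ▸ hp1)⟩
        · exact (Set.diff_subset.trans Set.inter_subset_left).trans hKI.2.2.2.2.1
        · exact Set.empty_subset _
        · exact Set.singleton_subset_iff.mpr hr
      · -- status of subE
        refine hst _ ⟨⟨K.A, ∅, (K.R ∩ K.A ×ˢ K.A) \ {r}, ∅⟩, ?_, rfl⟩
        refine ⟨⟨?_, ?_, ?_, ?_⟩, k2, fun x hx => k3 hx, ?_, ?_, ?_, ?_⟩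
        · simp
        · simp
        · exact fun p hp => ⟨Or.inl hp.1.2.1, Or.inl hp.1.2.2⟩
        · simp
        · intro p hp
          obtain ⟨hp1, hp2⟩ := hp
          have hu1 : p.1 ∈ K.A := by rcases hp2.1 with h | h; exact h; exact absurd h (Set.notMem_empty _)
          have hu2 : p.2 ∈ K.A := by rcases hp2.2 with h | h; exact h; exact absurd h (Set.notMem_empty _)
          exact ⟨⟨k4 ⟨Or.inl hp1, Or.inl hu1, Or.inl hu2⟩, hu1, hu2⟩,
            fun he => hrp (he ▸ hp1)⟩
        · intro p hp
          rcases k5 hp.1.1 with h | h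
          · rcases h with h | h
            · exact Or.inl h
            · exact absurd h hp.2
          · exact Or.inr h
        · exact Set.empty_subset _
        · exact Set.empty_subset _
      · -- not status of addE
        have hset : (((K.R ∩ K.A ×ˢ K.A) \ {r}) ∪ {r}) ∩ K.A ×ˢ K.A = K.R ∩ K.A ×ˢ K.A := by
          ext p
          constructor
          · rintro ⟨hp | hp, hu⟩
            · exact hp.1
            · rw [Set.mem_singleton_iff] at hp; subst hp
              exact ⟨hrK, hend.1, hend.2⟩
          · intro hp
            by_cases hpr : p = r
            · exact ⟨Or.inr (by simp [hpr]), hp.2⟩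
            · exact ⟨Or.inl ⟨hp, hpr⟩, hp.2⟩
        have hcerteq : ((IAF.mk K.A ∅ ((K.R ∩ K.A ×ˢ K.A) \ {r}) {r}).addE (.att r)).cert = K.cert :=
          congrArg (AF.mk K.A) hset
        rw [hcerteq]
        exact hKns
    · exfalso
      apply hKns
      have hMK : (IAF.mk K.A (∅ : Set α) (K.R ∩ K.A ×ˢ K.A) (∅ : Set (α × α))).cert = K.cert := by
        show (AF.mk K.A ((K.R ∩ K.A ×ˢ K.A) ∩ K.A ×ˢ K.A)) = AF.mk K.A (K.R ∩ K.A ×ˢ K.A)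
        rw [Set.inter_assoc, Set.inter_self]
      rw [← hMK]
      refine hst _ ⟨_, ?_, rfl⟩
      refine ⟨⟨?_, ?_, ?_, ?_⟩, k2, fun x hx => k3 hx, ?_, ?_, ?_, ?_⟩
      · simp
      · simp
      · intro p hp; exact ⟨Or.inl hp.2.1, Or.inl hp.2.2⟩
      · simp
      · intro p hp
        obtain ⟨hp1, hp2⟩ := hp
        have hu1 : p.1 ∈ K.A := by rcases hp2.1 with h | h; exact h; exact absurd h (Set.notMem_empty _)
        have hu2 : p.2 ∈ K.A := by rcases hp2.2 with h | h; exact h; exact absurd h (Set.notMem_empty _)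
        exact ⟨k4 ⟨Or.inl hp1, Or.inl hu1, Or.inl hu2⟩, hu1, hu2⟩
      · intro p hp
        obtain ⟨hp1, hu1, hu2⟩ := hp
        rcases k5 hp1 with h | h
        · rcases h with h | h
          · exact Or.inl h
          · rw [Set.mem_singleton_iff] at h; subst h
            exact absurd ⟨hu1, hu2⟩ hend
        · exact Or.inr h
      · exact Set.empty_subset _
      · exact Set.empty_subset _
  · -- r's endpoints not in Ip's universe
    exfalso
    refine hstr Ip ⟨⟨pA, pR, pRu, pRqu⟩, h2, h3, ?_, ?_, h6, ?_⟩ hst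
    · intro p hp
      rcases hp.1 with h | h
      · exact h4 ⟨h, hp.2⟩
      · rw [Set.mem_singleton_iff] at h; subst h
        exact absurd ⟨hp.2.1, hp.2.2⟩ huniv
    · intro p hp
      rcases h5 hp with h | h
      · exact Or.inl (Or.inl h)
      · exact Or.inr ⟨h, fun he => hrp (he ▸ hp)⟩
    · exact fun p hp => ⟨h7 hp, fun he => hrq (he ▸ hp)⟩

lemma arg_plus {I : IAF α} {S : Set α} {j : VStatus} {a : α}
    (hWF : I.WF) (ha : a ∈ I.Aq)
    (Ip : IAF α) (hIp : Ip.PartOf I) (hst : Ip.stableJ S j)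
    (hstr : ∀ I' : IAF α, I'.PartOf (I.subA {a}) → ¬ I'.stableJ S j) :
    ∃ I' : IAF α, I'.PartOf I ∧ onlyUnc I' (.arg a) ∧
      hasStatus ((I'.addE (.arg a)).cert) S j ∧ ¬ hasStatus ((I'.subE (.arg a)).cert) S j := by
  obtain ⟨wA, wR, wRu, wRqu⟩ := hWF
  obtain ⟨⟨pA, pR, pRu, pRqu⟩, h2, h3, h4, h5, h6, h7⟩ := hIp
  have haA : a ∉ I.A := fun h => wA.ne_of_mem h ha rfl
  have haq : a ∉ Ip.Aq → a ∈ Ip.A := by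
    intro haq
    by_contra haIpA
    have huniv : a ∉ Ip.A ∪ Ip.Aq := by rintro (h | h); exacts [haIpA h, haq h]
    refine hstr Ip ⟨⟨pA, pR, pRu, pRqu⟩, h2, ?_, ?_, ?_, ?_, ?_⟩ hst
    · intro x hx
      rcases h3 hx with h | h
      · exact Or.inl h
      · exact Or.inr ⟨h, fun he => huniv (by rw [Set.mem_singleton_iff] at he; exact he ▸ Or.inl hx)⟩
    · exact fun p hp => h4 ⟨hp.1.1, hp.2⟩
    · intro p hp
      have hne1 : p.1 ∉ ({a} : Set α) := fun he => huniv (by rw [Set.mem_singleton_iff] at he; exact he ▸ (pRu hp).1)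
      have hne2 : p.2 ∉ ({a} : Set α) := fun he => huniv (by rw [Set.mem_singleton_iff] at he; exact he ▸ (pRu hp).2)
      rcases h5 hp with h | h
      · exact Or.inl ⟨h, fun hT => hT.2.elim hne1 hne2⟩
      · exact Or.inr ⟨h, fun hT => hT.2.elim hne1 hne2⟩
    · intro x hx
      exact ⟨h6 hx, fun he => huniv (by rw [Set.mem_singleton_iff] at he; exact he ▸ Or.inr hx)⟩
    · intro p hp
      have hne1 : p.1 ∉ ({a} : Set α) := fun he => huniv (by rw [Set.mem_singleton_iff] at he; exact he ▸ (pRqu hp).1)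
      have hne2 : p.2 ∉ ({a} : Set α) := fun he => huniv (by rw [Set.mem_singleton_iff] at he; exact he ▸ (pRqu hp).2)
      exact ⟨h7 hp, fun hT => hT.2.elim hne1 hne2⟩
  have haIpq : a ∉ Ip.Aq := by
    intro haIpq
    have haIpA : a ∉ Ip.A := fun h => pA.ne_of_mem h haIpq rfl
    set Tp : Set (α × α) := {p | p ∈ Ip.R ∪ Ip.Rq ∧ (p.1 ∈ ({a} : Set α) ∨ p.2 ∈ ({a} : Set α))} with hTp
    set J : IAF α := ⟨Ip.A, Ip.Aq \ {a}, Ip.R \ Tp, Ip.Rq \ Tp⟩ with hJdef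
    have hRuJ : Ip.R \ Tp ⊆ (Ip.A ∪ (Ip.Aq \ {a})) ×ˢ (Ip.A ∪ (Ip.Aq \ {a})) := by
      intro p hp
      obtain ⟨hu1, hu2⟩ := pRu hp.1
      refine ⟨?_, ?_⟩
      · rcases hu1 with h | h
        · exact Or.inl h
        · exact Or.inr ⟨h, fun he => hp.2 ⟨Or.inl hp.1, Or.inl he⟩⟩
      · rcases hu2 with h | h
        · exact Or.inl h
        · exact Or.inr ⟨h, fun he => hp.2 ⟨Or.inl hp.1, Or.inr he⟩⟩
    have hRquJ : Ip.Rq \ Tp ⊆ (Ip.A ∪ (Ip.Aq \ {a})) ×ˢ (Ip.A ∪ (Ip.Aq \ {a})) := by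
      intro p hp
      obtain ⟨hu1, hu2⟩ := pRqu hp.1
      refine ⟨?_, ?_⟩
      · rcases hu1 with h | h
        · exact Or.inl h
        · exact Or.inr ⟨h, fun he => hp.2 ⟨Or.inr hp.1, Or.inl he⟩⟩
      · rcases hu2 with h | h
        · exact Or.inl h
        · exact Or.inr ⟨h, fun he => hp.2 ⟨Or.inr hp.1, Or.inr he⟩⟩
    have hJWF : J.WF := ⟨pA.mono_right Set.diff_subset,
      (pR.mono Set.diff_subset Set.diff_subset), hRuJ, hRquJ⟩
    have hJIp : J.PartOf Ip := by
      refine ⟨hJWF, subset_rfl, ?_, ?_, Set.diff_subset.trans Set.subset_union_left,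
        Set.diff_subset, Set.diff_subset⟩
      · exact Set.subset_union_left
      · intro p hp
        obtain ⟨hp1, hu1, hu2⟩ := hp
        refine ⟨hp1, fun hT => ?_⟩
        rcases hT.2 with he | he
        · rw [Set.mem_singleton_iff] at he
          rcases hu1 with h | h
          · exact haIpA (he ▸ h)
          · exact h.2 he
        · rw [Set.mem_singleton_iff] at he
          rcases hu2 with h | h
          · exact haIpA (he ▸ h)
          · exact h.2 he
    have hJsub : J.PartOf (I.subA {a}) := by
      refine ⟨hJWF, h2, ?_, ?_, ?_, ?_, ?_⟩
      · intro x hx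
        rcases h3 hx with h | h
        · exact Or.inl h
        · exact Or.inr ⟨h, fun he => haIpA ((Set.mem_singleton_iff.mp he) ▸ hx)⟩
      · intro p hp
        obtain ⟨⟨hpR, hpT⟩, hu1, hu2⟩ := hp
        have hu1' : p.1 ∈ Ip.A ∪ Ip.Aq := by
          rcases hu1 with h | h; exacts [Or.inl h, Or.inr h.1]
        have hu2' : p.2 ∈ Ip.A ∪ Ip.Aq := by
          rcases hu2 with h | h; exacts [Or.inl h, Or.inr h.1]
        refine ⟨h4 ⟨hpR, hu1', hu2'⟩, fun hT => ?_⟩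
        refine hpT ⟨Or.inl hpR, hT.2⟩
      · intro p hp
        have hpT : p ∉ {q : α × α | q ∈ I.R ∪ I.Rq ∧ (q.1 ∈ ({a} : Set α) ∨ q.2 ∈ ({a} : Set α))} :=
          fun hT => hp.2 ⟨Or.inl hp.1, hT.2⟩
        rcases h5 hp.1 with h | h
        · exact Or.inl ⟨h, hpT⟩
        · exact Or.inr ⟨h, hpT⟩
      · exact fun x hx => ⟨h6 hx.1, hx.2⟩
      · intro p hp
        exact ⟨h7 hp.1, fun hT => hp.2 ⟨Or.inr hp.1, hT.2⟩⟩
    exact hstr J hJsub (stable_mono hJIp hst)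
  have haIpA : a ∈ Ip.A := haq haIpq
  -- main case
  set Tp : Set (α × α) := {p | p ∈ Ip.R ∪ Ip.Rq ∧ (p.1 ∈ ({a} : Set α) ∨ p.2 ∈ ({a} : Set α))} with hTp
  set J : IAF α := ⟨Ip.A \ {a}, Ip.Aq, Ip.R \ Tp, Ip.Rq \ Tp⟩ with hJdef
  have hJuniv : (Ip.A \ {a}) ∪ Ip.Aq ⊆ Ip.A ∪ Ip.Aq := by
    rintro x (h | h); exacts [Or.inl h.1, Or.inr h]
  have hRuJ : Ip.R \ Tp ⊆ ((Ip.A \ {a}) ∪ Ip.Aq) ×ˢ ((Ip.A \ {a}) ∪ Ip.Aq) := by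
    intro p hp
    obtain ⟨hu1, hu2⟩ := pRu hp.1
    refine ⟨?_, ?_⟩
    · rcases hu1 with h | h
      · exact Or.inl ⟨h, fun he => hp.2 ⟨Or.inl hp.1, Or.inl he⟩⟩
      · exact Or.inr h
    · rcases hu2 with h | h
      · exact Or.inl ⟨h, fun he => hp.2 ⟨Or.inl hp.1, Or.inr he⟩⟩
      · exact Or.inr h
  have hRquJ : Ip.Rq \ Tp ⊆ ((Ip.A \ {a}) ∪ Ip.Aq) ×ˢ ((Ip.A \ {a}) ∪ Ip.Aq) := by
    intro p hp
    obtain ⟨hu1, hu2⟩ := pRqu hp.1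
    refine ⟨?_, ?_⟩
    · rcases hu1 with h | h
      · exact Or.inl ⟨h, fun he => hp.2 ⟨Or.inr hp.1, Or.inl he⟩⟩
      · exact Or.inr h
    · rcases hu2 with h | h
      · exact Or.inl ⟨h, fun he => hp.2 ⟨Or.inr hp.1, Or.inr he⟩⟩
      · exact Or.inr h
  have haJuniv : a ∉ (Ip.A \ {a}) ∪ Ip.Aq := by
    rintro (h | h)
    · exact h.2 rfl
    · exact pA.ne_of_mem haIpA h rfl
  have hJWF : J.WF := ⟨(pA.mono_left Set.diff_subset),
    (pR.mono Set.diff_subset Set.diff_subset), hRuJ, hRquJ⟩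
  have hIAJ : I.A ⊆ Ip.A \ {a} := fun x hx => ⟨h2 hx, fun he => haA ((Set.mem_singleton_iff.mp he) ▸ hx)⟩
  have hJsub : J.PartOf (I.subA {a}) := by
    refine ⟨hJWF, hIAJ, ?_, ?_, ?_, ?_, ?_⟩
    · intro x hx
      rcases h3 hx.1 with h | h
      · exact Or.inl h
      · exact Or.inr ⟨h, hx.2⟩
    · intro p hp
      obtain ⟨⟨hpR, hpT⟩, hu1, hu2⟩ := hp
      refine ⟨h4 ⟨hpR, hJuniv hu1, hJuniv hu2⟩, fun hT => hpT ⟨Or.inl hpR, hT.2⟩⟩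
    · intro p hp
      have hpT : p ∉ {q : α × α | q ∈ I.R ∪ I.Rq ∧ (q.1 ∈ ({a} : Set α) ∨ q.2 ∈ ({a} : Set α))} :=
        fun hT => hp.2 ⟨Or.inl hp.1, hT.2⟩
      rcases h5 hp.1 with h | h
      · exact Or.inl ⟨h, hpT⟩
      · exact Or.inr ⟨h, hpT⟩
    · exact fun x hx => ⟨h6 hx, fun he => pA.ne_of_mem haIpA hx (Set.mem_singleton_iff.mp he).symm⟩
    · exact fun p hp => ⟨h7 hp.1, fun hT => hp.2 ⟨Or.inr hp.1, hT.2⟩⟩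
  have hJI : J.PartOf I := by
    refine ⟨hJWF, hIAJ, fun x hx => h3 hx.1, ?_,
      (Set.diff_subset).trans h5, h6, Set.diff_subset.trans h7⟩
    intro p hp
    obtain ⟨hpR, hu1, hu2⟩ := hp
    have hu1' : p.1 ∈ (Ip.A \ {a}) ∪ Ip.Aq := hu1
    have hu2' : p.2 ∈ (Ip.A \ {a}) ∪ Ip.Aq := hu2
    refine ⟨h4 ⟨hpR, hJuniv hu1', hJuniv hu2'⟩, fun hT => ?_⟩
    rcases hT.2 with he | he
    · exact haJuniv ((Set.mem_singleton_iff.mp he) ▸ hu1')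
    · exact haJuniv ((Set.mem_singleton_iff.mp he) ▸ hu2')
  obtain ⟨K, hKJ, hKns⟩ := not_stable_elim (hstr J hJsub)
  have hKI : K.PartOf I := partOf_trans hKJ hJI
  obtain ⟨⟨kA, kR, kRu, kRqu⟩, k2, k3, k4, k5, k6, k7⟩ := hKJ
  have haK : a ∉ K.A := by
    intro h
    rcases k3 h with h' | h'
    · exact h'.2 rfl
    · exact pA.ne_of_mem haIpA h' rfl
  set R' : Set (α × α) := (K.R ∩ K.A ×ˢ K.A) ∪ (Ip.R ∩ (K.A ∪ {a}) ×ˢ (K.A ∪ {a})) with hR'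
  have hKuIp : K.A ⊆ Ip.A ∪ Ip.Aq := fun x hx => hJuniv (k3 hx)
  have hKaIp : K.A ∪ {a} ⊆ Ip.A ∪ Ip.Aq := by
    rintro x (h | h)
    · exact hKuIp h
    · exact Or.inl ((Set.mem_singleton_iff.mp h) ▸ haIpA)
  refine ⟨⟨K.A, {a}, R', ∅⟩, ?_, ⟨rfl, rfl⟩, ?_, ?_⟩
  · -- PartOf I
    refine ⟨⟨?_, ?_, ?_, ?_⟩, hIAJ.trans k2, fun x hx => hKI.2.2.1 hx, ?_, ?_, ?_, ?_⟩
    · exact Set.disjoint_singleton_right.mpr haK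
    · simp
    · intro p hp
      rcases hp with hp | hp
      · exact ⟨Or.inl hp.2.1, Or.inl hp.2.2⟩
      · rcases hp.2 with ⟨hu1, hu2⟩
        constructor
        · rcases hu1 with h | h; exacts [Or.inl h, Or.inr h]
        · rcases hu2 with h | h; exacts [Or.inl h, Or.inr h]
    · exact Set.empty_subset _
    · intro p hp
      obtain ⟨hp1, hu1, hu2⟩ := hp
      refine Or.inr ⟨h4 ⟨hp1, ?_, ?_⟩, hu1, hu2⟩
      · exact hKaIp hu1
      · exact hKaIp hu2
    · intro p hp
      rcases hp with hp | hp
      · exact hKI.2.2.2.2.1 hp.1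
      · exact h5 hp.1
    · exact Set.singleton_subset_iff.mpr ha
    · exact Set.empty_subset _
  · -- status of addE
    refine hst _ ⟨⟨K.A ∪ {a}, ∅, R', ∅⟩, ?_, rfl⟩
    refine ⟨⟨?_, ?_, ?_, ?_⟩, ?_, ?_, ?_, ?_, ?_, ?_⟩
    · simp
    · simp
    · intro p hp
      rcases hp with hp | hp
      · exact ⟨Or.inl (Or.inl hp.2.1), Or.inl (Or.inl hp.2.2)⟩
      · exact ⟨Or.inl hp.2.1, Or.inl hp.2.2⟩
    · exact Set.empty_subset _
    · intro x hx
      by_cases hxa : x = a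
      · exact Or.inr (Set.mem_singleton_iff.mpr hxa)
      · exact Or.inl (k2 ⟨hx, hxa⟩)
    · intro x hx
      rcases hx with h | h
      · exact hKuIp h
      · exact Or.inl ((Set.mem_singleton_iff.mp h) ▸ haIpA)
    · intro p hp
      obtain ⟨hp1, hu1, hu2⟩ := hp
      have hu1' : p.1 ∈ K.A ∪ {a} := by
        rcases hu1 with h | h; exacts [h, absurd h (Set.notMem_empty _)]
      have hu2' : p.2 ∈ K.A ∪ {a} := by
        rcases hu2 with h | h; exacts [h, absurd h (Set.notMem_empty _)]
      exact Or.inr ⟨hp1, hu1', hu2'⟩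
    · intro p hp
      rcases hp with hp | hp
      · rcases k5 hp.1 with h | h
        · exact Or.inl h.1
        · exact Or.inr h.1
      · exact Or.inl hp.1
    · exact Set.empty_subset _
    · exact Set.empty_subset _
  · -- not status of subE
    have hset : (R' \ {p : α × α | p ∈ R' ∪ (∅ : Set (α × α)) ∧ (p.1 ∈ ({a} : Set α) ∨ p.2 ∈ ({a} : Set α))})
        ∩ K.A ×ˢ K.A = K.R ∩ K.A ×ˢ K.A := by
      ext p
      constructor
      · rintro ⟨⟨hpR, _⟩, hu1, hu2⟩
        refine ⟨?_, hu1, hu2⟩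
        rcases hpR with hp | hp
        · exact hp.1
        · refine k4 ⟨⟨hp.1, fun hT => ?_⟩, Or.inl hu1, Or.inl hu2⟩
          rcases hT.2 with he | he
          · exact haK ((Set.mem_singleton_iff.mp he) ▸ hu1)
          · exact haK ((Set.mem_singleton_iff.mp he) ▸ hu2)
      · rintro ⟨hpR, hu1, hu2⟩
        refine ⟨⟨Or.inl ⟨hpR, hu1, hu2⟩, fun hT => ?_⟩, hu1, hu2⟩
        rcases hT.2 with he | he
        · exact haK ((Set.mem_singleton_iff.mp he) ▸ hu1)
        · exact haK ((Set.mem_singleton_iff.mp he) ▸ hu2)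
    have hcerteq : ((IAF.mk K.A {a} R' ∅).subE (.arg a)).cert = K.cert :=
      congrArg (AF.mk K.A) hset
    rw [hcerteq]
    exact hKns

lemma arg_minus {I : IAF α} {S : Set α} {j : VStatus} {a : α}
    (hWF : I.WF) (ha : a ∈ I.Aq)
    (Ip : IAF α) (hIp : Ip.PartOf I) (hst : Ip.stableJ S j)
    (hstr : ∀ I' : IAF α, I'.PartOf (I.addA {a}) → ¬ I'.stableJ S j) :
    ∃ I' : IAF α, I'.PartOf I ∧ onlyUnc I' (.arg a) ∧
      hasStatus ((I'.subE (.arg a)).cert) S j ∧ ¬ hasStatus ((I'.addE (.arg a)).cert) S j := by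
  obtain ⟨wA, wR, wRu, wRqu⟩ := hWF
  obtain ⟨⟨pA, pR, pRu, pRqu⟩, h2, h3, h4, h5, h6, h7⟩ := hIp
  have haA : a ∉ I.A := fun h => wA.ne_of_mem h ha rfl
  have haIpA : a ∉ Ip.A := by
    intro haIpA
    refine hstr Ip ⟨⟨pA, pR, pRu, pRqu⟩, ?_, ?_, h4, h5, ?_, h7⟩ hst
    · rintro x (hx | hx)
      · exact h2 hx
      · exact (Set.mem_singleton_iff.mp hx) ▸ haIpA
    · intro x hx
      rcases h3 hx with h | h
      · exact Or.inl (Or.inl h)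
      · by_cases hxa : x = a
        · exact Or.inl (Or.inr (Set.mem_singleton_iff.mpr hxa))
        · exact Or.inr ⟨h, hxa⟩
    · exact fun x hx => ⟨h6 hx, fun he => pA.ne_of_mem haIpA hx (Set.mem_singleton_iff.mp he).symm⟩
  have haIpq : a ∉ Ip.Aq := by
    intro hq
    set J : IAF α := ⟨Ip.A ∪ {a}, Ip.Aq \ {a}, Ip.R, Ip.Rq⟩ with hJdef
    have hmap : Ip.A ∪ Ip.Aq ⊆ (Ip.A ∪ {a}) ∪ (Ip.Aq \ {a}) := by
      rintro x (h | h)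
      · exact Or.inl (Or.inl h)
      · by_cases hxa : x = a
        · exact Or.inl (Or.inr (Set.mem_singleton_iff.mpr hxa))
        · exact Or.inr ⟨h, hxa⟩
    have hmap' : (Ip.A ∪ {a}) ∪ (Ip.Aq \ {a}) ⊆ Ip.A ∪ Ip.Aq := by
      rintro x ((h | h) | h)
      · exact Or.inl h
      · exact Or.inr ((Set.mem_singleton_iff.mp h) ▸ hq)
      · exact Or.inr h.1
    have hJWF : J.WF := by
      refine ⟨?_, pR, fun p hp => ⟨hmap (pRu hp).1, hmap (pRu hp).2⟩,
        fun p hp => ⟨hmap (pRqu hp).1, hmap (pRqu hp).2⟩⟩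
      rw [Set.disjoint_left]
      rintro x (hx | hx) hx2
      · exact pA.ne_of_mem hx hx2.1 rfl
      · exact hx2.2 hx
    have hJIp : J.PartOf Ip := by
      refine ⟨hJWF, Set.subset_union_left, ?_, fun p hp => hp.1,
        Set.subset_union_left, Set.diff_subset, subset_rfl⟩
      rintro x (h | h)
      · exact Or.inl h
      · exact Or.inr ((Set.mem_singleton_iff.mp h) ▸ hq)
    have hJadd : J.PartOf (I.addA {a}) := by
      refine ⟨hJWF, ?_, ?_, ?_, h5, fun x hx => ⟨h6 hx.1, hx.2⟩, h7⟩
      · rintro x (hx | hx)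
        · exact Or.inl (h2 hx)
        · exact Or.inr hx
      · rintro x (hx | hx)
        · rcases h3 hx with h | h
          · exact Or.inl (Or.inl h)
          · exact Or.inr ⟨h, fun he => haIpA ((Set.mem_singleton_iff.mp he) ▸ hx)⟩
        · exact Or.inl (Or.inr hx)
      · intro p hp
        exact h4 ⟨hp.1, hmap' hp.2.1, hmap' hp.2.2⟩
    exact hstr J hJadd (stable_mono hJIp hst)
  -- main case: a is decided out in Ip
  set U : Set α := (Ip.A ∪ {a}) ∪ Ip.Aq with hU
  set RJ : Set (α × α) := I.R ∩ U ×ˢ U with hRJ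
  set J : IAF α := ⟨Ip.A ∪ {a}, Ip.Aq, Ip.R ∪ RJ, Ip.Rq⟩ with hJdef
  have hmap : Ip.A ∪ Ip.Aq ⊆ U := by
    rintro x (h | h)
    · exact Or.inl (Or.inl h)
    · exact Or.inr h
  have hmap2 : U ⊆ I.A ∪ I.Aq := by
    rintro x ((h | h) | h)
    · exact h3 h
    · exact Or.inr ((Set.mem_singleton_iff.mp h) ▸ ha)
    · exact Or.inr (h6 h)
  have hJWF : J.WF := by
    refine ⟨?_, ?_, ?_, fun p hp => ⟨hmap (pRqu hp).1, hmap (pRqu hp).2⟩⟩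
    · rw [Set.disjoint_left]
      rintro x (hx | hx) hx2
      · exact pA.ne_of_mem hx hx2 rfl
      · exact haIpq ((Set.mem_singleton_iff.mp hx) ▸ hx2)
    · rw [Set.disjoint_left]
      rintro p (hp | hp) hp2
      · exact pR.ne_of_mem hp hp2 rfl
      · exact wR.ne_of_mem hp.1 (h7 hp2) rfl
    · rintro p (hp | hp)
      · exact ⟨hmap (pRu hp).1, hmap (pRu hp).2⟩
      · exact hp.2
  have hJadd : J.PartOf (I.addA {a}) := by
    refine ⟨hJWF, ?_, ?_, ?_, ?_, fun x hx => ⟨h6 hx, fun he => haIpq ((Set.mem_singleton_iff.mp he) ▸ hx)⟩, h7⟩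
    · rintro x (hx | hx)
      · exact Or.inl (h2 hx)
      · exact Or.inr hx
    · rintro x (hx | hx)
      · rcases h3 hx with h | h
        · exact Or.inl (Or.inl h)
        · exact Or.inr ⟨h, fun he => haIpA ((Set.mem_singleton_iff.mp he) ▸ hx)⟩
      · exact Or.inl (Or.inr hx)
    · exact fun p hp => Or.inr ⟨hp.1, hp.2⟩
    · rintro p (hp | hp)
      · exact h5 hp
      · exact Or.inl hp.1
  have hJI : J.PartOf I := by
    refine ⟨hJWF, fun x hx => Or.inl (h2 hx), ?_, fun p hp => Or.inr ⟨hp.1, hp.2⟩, ?_, h6, h7⟩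
    · rintro x (hx | hx)
      · exact h3 hx
      · exact Or.inr ((Set.mem_singleton_iff.mp hx) ▸ ha)
    · rintro p (hp | hp)
      · exact h5 hp
      · exact Or.inl hp.1
  obtain ⟨K, hKJ, hKns⟩ := not_stable_elim (hstr J hJadd)
  have hKI : K.PartOf I := partOf_trans hKJ hJI
  obtain ⟨⟨kA, kR, kRu, kRqu⟩, k2, k3, k4, k5, k6, k7⟩ := hKJ
  have haK : a ∈ K.A := k2 (Or.inr rfl)
  have hDIp : K.A \ {a} ⊆ Ip.A ∪ Ip.Aq := by
    intro x hx
    rcases k3 hx.1 with h | h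
    · rcases h with h | h
      · exact Or.inl h
      · exact absurd (Set.mem_singleton_iff.mp h) hx.2
    · exact Or.inr h
  refine ⟨⟨K.A \ {a}, {a}, K.R ∩ K.A ×ˢ K.A, ∅⟩, ?_, ⟨rfl, rfl⟩, ?_, ?_⟩
  · -- PartOf I
    refine ⟨⟨?_, ?_, ?_, ?_⟩, ?_, fun x hx => hKI.2.2.1 hx.1, ?_, ?_, ?_, ?_⟩
    · exact Set.disjoint_singleton_right.mpr (fun h => h.2 rfl)
    · simp
    · intro p hp
      obtain ⟨hp1, hu1, hu2⟩ := hp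
      constructor
      · by_cases h : p.1 = a
        · exact Or.inr (Set.mem_singleton_iff.mpr h)
        · exact Or.inl ⟨hu1, h⟩
      · by_cases h : p.2 = a
        · exact Or.inr (Set.mem_singleton_iff.mpr h)
        · exact Or.inl ⟨hu2, h⟩
    · exact Set.empty_subset _
    · exact fun x hx => ⟨k2 (Or.inl (h2 hx)), fun he => haA ((Set.mem_singleton_iff.mp he) ▸ hx)⟩
    · intro p hp
      obtain ⟨hp1, hu1, hu2⟩ := hp
      have hmapK : (K.A \ {a}) ∪ {a} ⊆ K.A := by
        rintro x (h | h)
        · exact h.1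
        · exact (Set.mem_singleton_iff.mp h) ▸ haK
      have hu1' := hmapK hu1
      have hu2' := hmapK hu2
      exact ⟨hKI.2.2.2.1 ⟨hp1, Or.inl hu1', Or.inl hu2'⟩, hu1', hu2'⟩
    · exact Set.inter_subset_left.trans hKI.2.2.2.2.1
    · exact Set.singleton_subset_iff.mpr ha
    · exact Set.empty_subset _
  · -- status of subE : completion of Ip
    have hset : ((K.R ∩ K.A ×ˢ K.A) \
          {p : α × α | p ∈ (K.R ∩ K.A ×ˢ K.A) ∪ (∅ : Set (α × α)) ∧ (p.1 ∈ ({a} : Set α) ∨ p.2 ∈ ({a} : Set α))})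
        ∩ (K.A \ {a}) ×ˢ (K.A \ {a}) =
        (K.R ∩ (K.A \ {a}) ×ˢ (K.A \ {a})) ∩ (K.A \ {a}) ×ˢ (K.A \ {a}) := by
      ext p
      constructor
      · rintro ⟨⟨hp, _⟩, hu1, hu2⟩
        exact ⟨⟨hp.1, hu1, hu2⟩, hu1, hu2⟩
      · rintro ⟨⟨hp, hu1, hu2⟩, _⟩
        refine ⟨⟨⟨hp, hu1.1, hu2.1⟩, fun hT => ?_⟩, hu1, hu2⟩
        rcases hT.2 with he | he
        · exact hu1.2 he
        · exact hu2.2 he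
    have hcerteq : ((IAF.mk (K.A \ {a}) {a} (K.R ∩ K.A ×ˢ K.A) ∅).subE (.arg a)).cert =
        (IAF.mk (K.A \ {a}) (∅ : Set α) (K.R ∩ (K.A \ {a}) ×ˢ (K.A \ {a})) (∅ : Set (α × α))).cert :=
      congrArg (AF.mk (K.A \ {a})) hset
    rw [hcerteq]
    refine hst _ ⟨_, ?_, rfl⟩
    refine ⟨⟨?_, ?_, ?_, ?_⟩, ?_, fun x hx => hDIp hx, ?_, ?_, ?_, ?_⟩
    · simp
    · simp
    · exact fun p hp => ⟨Or.inl hp.2.1, Or.inl hp.2.2⟩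
    · exact Set.empty_subset _
    · exact fun x hx => ⟨k2 (Or.inl hx), fun he => haIpA ((Set.mem_singleton_iff.mp he) ▸ hx)⟩
    · intro p hp
      obtain ⟨hp1, hu1, hu2⟩ := hp
      have hu1' : p.1 ∈ K.A \ {a} := by
        rcases hu1 with h | h; exacts [h, absurd h (Set.notMem_empty _)]
      have hu2' : p.2 ∈ K.A \ {a} := by
        rcases hu2 with h | h; exacts [h, absurd h (Set.notMem_empty _)]
      exact ⟨k4 ⟨Or.inl hp1, Or.inl hu1'.1, Or.inl hu2'.1⟩, hu1', hu2'⟩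
    · intro p hp
      obtain ⟨hp1, hu1, hu2⟩ := hp
      rcases k5 hp1 with h | h
      · rcases h with h | h
        · exact Or.inl h
        · exact Or.inl (h4 ⟨h.1, hDIp hu1, hDIp hu2⟩)
      · exact Or.inr h
    · exact Set.empty_subset _
    · exact Set.empty_subset _
  · -- not status of addE : equals cert K
    have hA : (K.A \ {a}) ∪ {a} = K.A := by
      rw [Set.diff_union_self]
      exact Set.union_eq_self_of_subset_right (Set.singleton_subset_iff.mpr haK)
    have hcerteq : ((IAF.mk (K.A \ {a}) {a} (K.R ∩ K.A ×ˢ K.A) ∅).addE (.arg a)).cert = K.cert := by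
      show AF.mk ((K.A \ {a}) ∪ {a})
          ((K.R ∩ K.A ×ˢ K.A) ∩ ((K.A \ {a}) ∪ {a}) ×ˢ ((K.A \ {a}) ∪ {a})) = K.cert
      rw [hA]
      show AF.mk K.A ((K.R ∩ K.A ×ˢ K.A) ∩ K.A ×ˢ K.A) = AF.mk K.A (K.R ∩ K.A ×ˢ K.A)
      rw [Set.inter_assoc, Set.inter_self]
    rw [hcerteq]
    exact hKns

end Helpers


/-- strong relevance implies relevance. -/
theorem stmt19 {α : Type u} (I : IAF α) (S : Set α) (j : VStatus)
    (hWF : I.WF) (hS : S ⊆ I.A ∪ I.Aq)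
    (hex : ∃ Ip : IAF α, Ip.PartOf I ∧ Ip.stableJ S j) :
    SREplus I S j ⊆ REplus I S j ∧ SREminus I S j ⊆ REminus I S j := by
  obtain ⟨Ip, hIpI, hIpS⟩ := hex
  constructor
  · rintro e ⟨hunc, hstr⟩
    refine ⟨hunc, ?_⟩
    cases e with
    | arg a =>
      obtain ⟨I', hP, hO, hadd, hsub⟩ := arg_plus hWF hunc Ip hIpI hIpS hstr
      exact ⟨I', hP, hO, hadd, hsub⟩
    | att r =>
      obtain ⟨I', hP, hO, hadd, hsub⟩ := att_plus hWF hunc Ip hIpI hIpS hstr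
      exact ⟨I', hP, hO, hadd, hsub⟩
  · rintro e ⟨hunc, hstr⟩
    refine ⟨hunc, ?_⟩
    cases e with
    | arg a =>
      obtain ⟨I', hP, hO, hsub, hadd⟩ := arg_minus hWF hunc Ip hIpI hIpS hstr
      exact ⟨I', hP, hO, hsub, hadd⟩
    | att r =>
      obtain ⟨I', hP, hO, hsub, hadd⟩ := att_minus hWF hunc Ip hIpI hIpS hstr
      exact ⟨I', hP, hO, hsub, hadd⟩
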